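/- arXiv:solv-int/9909004 — 2 statements merged into one kernel-verified Lean document; each statement's English description precedes it below -/
import Mathlib

section
/- Let γ ∈ ℝ and let F : (α,β) → M₃(ℝ) be a twice differentiable matrix-valued function with F(t) invertible for all t, satisfying Fᵀ(t) F̈(t) + |det F(t)|^{1−γ} I = 0 for all t (the case G = I). Then the angular momentum matrix J(t) = F(t) Ḟᵀ(t) − Ḟ(t) Fᵀ(t) is constant in t (its time derivative vanishes identically). -/
/-!
Differentiating `J = F Ḟᵀ − Ḟ Fᵀ` gives `J̇ = F F̈ᵀ − F̈ Fᵀ`, the `Ḟ Ḟᵀ` terms cancelling.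
The equation of motion says `Fᵀ F̈` is the scalar matrix `−|det F|^{1−γ} I`; since `F` is
invertible, the factors of a scalar matrix may be swapped, so `F̈ Fᵀ` is the same scalar
matrix and so is its transpose `F F̈ᵀ`. Hence `J̇ = 0`.
-/

open Matrix

attribute [local instance] Matrix.frobeniusNormedAddCommGroup Matrix.frobeniusNormedSpace
  Matrix.frobeniusNormedRing Matrix.frobeniusNormedAlgebra

theorem mul_eq_of_isUnit_of_commute {M : Type*} [Monoid M] {x y z : M} (hx : IsUnit x)
    (hxz : Commute x z) (h : x * y = z) : y * x = z := by
  obtain ⟨u, rfl⟩ := hx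
  calc y * u = ↑u⁻¹ * (u * y) * u := by simp
    _ = z := by rw [h, mul_assoc, ← hxz.eq, ← mul_assoc, Units.inv_mul, one_mul]

namespace Matrix

variable {n R : Type*} [Fintype n] [DecidableEq n] [CommRing R]

theorem mul_transpose_eq_of_transpose_mul_eq_smul_one {X Y : Matrix n n R} (hX : IsUnit X)
    {c : R} (h : Xᵀ * Y = c • 1) : X * Yᵀ = Y * Xᵀ := by
  have hYX : Y * Xᵀ = c • 1 :=
    mul_eq_of_isUnit_of_commute ((isUnit_transpose X).mpr hX)
      ((Commute.one_right _).smul_right c) h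
  rw [← transpose_transpose X, ← transpose_mul, transpose_transpose, hYX, transpose_smul,
    transpose_one]

end Matrix

section Derivatives

variable {𝕜 : Type*} [RCLike 𝕜] {m n : Type*} [Fintype m] [Fintype n]

theorem HasDerivAt.matrix_transpose {F : 𝕜 → Matrix m n 𝕜} {F' : Matrix m n 𝕜} {t : 𝕜}
    (h : HasDerivAt F F' t) : HasDerivAt (fun s => (F s)ᵀ) F'ᵀ t :=
  (transposeLinearEquiv m n 𝕜 𝕜).toLinearMap.toContinuousLinearMap.hasFDerivAt.comp_hasDerivAt
    t h

variable [DecidableEq n]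

theorem HasDerivAt.mul_transpose_sub_mul_transpose {F F' : 𝕜 → Matrix n n 𝕜}
    {F'' : Matrix n n 𝕜} {t : 𝕜} (hF : HasDerivAt F (F' t) t) (hF' : HasDerivAt F' F'' t) :
    HasDerivAt (fun s => F s * (F' s)ᵀ - F' s * (F s)ᵀ) (F t * F''ᵀ - F'' * (F t)ᵀ) t := by
  refine ((hF.mul hF'.matrix_transpose).sub (hF'.mul hF.matrix_transpose)).congr_deriv ?_
  abel

end Derivatives

/-- For a twice differentiable curve `F(t)` of invertible 3×3 real matrices satisfying
the gas-cloud equations `Fᵀ F̈ + |det F|^{1−γ} I = 0` (the case `G = I`), the angular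
momentum matrix `J = F Ḟᵀ − Ḟ Fᵀ` is a constant of motion: its time derivative
vanishes identically on the interval. -/
theorem angular_momentum_conserved (γ α β : ℝ)
    (F F' F'' : ℝ → Matrix (Fin 3) (Fin 3) ℝ)
    (hinv : ∀ t ∈ Set.Ioo α β, IsUnit (F t))
    (hF' : ∀ t ∈ Set.Ioo α β, HasDerivAt F (F' t) t)
    (hF'' : ∀ t ∈ Set.Ioo α β, HasDerivAt F' (F'' t) t)
    (heq : ∀ t ∈ Set.Ioo α β,
      (F t)ᵀ * F'' t + |(F t).det| ^ (1 - γ) • (1 : Matrix (Fin 3) (Fin 3) ℝ) = 0) :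
    ∀ t ∈ Set.Ioo α β,
      HasDerivAt (fun s => F s * (F' s)ᵀ - F' s * (F s)ᵀ)
        (0 : Matrix (Fin 3) (Fin 3) ℝ) t := by
  intro t ht
  have hscalar : (F t)ᵀ * F'' t = (-|(F t).det| ^ (1 - γ)) • 1 := by
    rw [neg_smul]
    exact eq_neg_of_add_eq_zero_left (heq t ht)
  have hcomm := mul_transpose_eq_of_transpose_mul_eq_smul_one (hinv t ht) hscalar
  simpa [hcomm] using (hF' t ht).mul_transpose_sub_mul_transpose (hF'' t ht)
end

section
/- Let a ∈ ℝ and let J, y : ℝ → ℝ³ be differentiable curves with y₁(u), y₂(u), y₃(u) ≠ 0 for all u, satisfying dJ/du = (a²/2)(y × y⁻¹) and dy/du = −(1/2)(J × y⁻¹), where y⁻¹ = (1/y₁, 1/y₂, 1/y₃). Then the quantity (J, y)(u) = J₁(u) y₁(u) + J₂(u) y₂(u) + J₃(u) y₃(u) is constant in u. In particular, the Casimir-type constraint (J,y) = 0 (the orbit c₂ = 0) is preserved by the flow. -/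
/-! The derivative of `(J, y)` is `(a²/2) (y × y⁻¹, y) − (1/2) (J, J × y⁻¹)`, a sum of two
triple products each with a repeated factor, so it vanishes identically. -/

def cross (u v : Fin 3 → ℝ) : Fin 3 → ℝ :=
  ![u 1 * v 2 - u 2 * v 1, u 2 * v 0 - u 0 * v 2, u 0 * v 1 - u 1 * v 0]

open Matrix

theorem cross_eq_crossProduct (u v : Fin 3 → ℝ) : cross u v = u ⨯₃ v := rfl

theorem HasDerivAt.dotProduct {ι : Type*} [Fintype ι] {f g : ℝ → ι → ℝ} {f' g' : ι → ℝ}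
    {t : ℝ} (hf : HasDerivAt f f' t) (hg : HasDerivAt g g' t) :
    HasDerivAt (fun s => f s ⬝ᵥ g s) (f' ⬝ᵥ g t + f t ⬝ᵥ g') t := by
  have hfi := hasDerivAt_pi.mp hf
  have hgi := hasDerivAt_pi.mp hg
  unfold _root_.dotProduct
  rw [← Finset.sum_add_distrib]
  exact HasDerivAt.fun_sum fun i _ => (hfi i).fun_mul (hgi i)

theorem dotProduct_eq_of_hasDerivAt_cross {J y v w : ℝ → Fin 3 → ℝ} {α β : ℝ}
    (hJ : ∀ u, HasDerivAt J (α • y u ⨯₃ w u) u)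
    (hy : ∀ u, HasDerivAt y (β • J u ⨯₃ v u) u) (u₁ u₂ : ℝ) :
    J u₁ ⬝ᵥ y u₁ = J u₂ ⬝ᵥ y u₂ := by
  have hderiv : ∀ u, HasDerivAt (fun s => J s ⬝ᵥ y s) 0 u := fun u => by
    simpa only [smul_dotProduct, dotProduct_smul, dotProduct_comm _ (y u), dot_self_cross,
      smul_zero, add_zero] using (hJ u).dotProduct (hy u)
  exact is_const_of_deriv_eq_zero (fun u => (hderiv u).differentiableAt)
    (fun u => (hderiv u).deriv) u₁ u₂

theorem deformed_top_casimir_conserved_general (a : ℝ)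
    (J y : ℝ → Fin 3 → ℝ)
    (hJ : ∀ u, HasDerivAt J ((a ^ 2 / 2) • cross (y u) (fun i => (y u i)⁻¹)) u)
    (hy : ∀ u, HasDerivAt y (-((1 : ℝ) / 2) • cross (J u) (fun i => (y u i)⁻¹)) u) :
    ∀ u₁ u₂ : ℝ,
      J u₁ 0 * y u₁ 0 + J u₁ 1 * y u₁ 1 + J u₁ 2 * y u₁ 2 =
        J u₂ 0 * y u₂ 0 + J u₂ 1 * y u₂ 1 + J u₂ 2 * y u₂ 2 := by
  intro u₁ u₂
  simp only [cross_eq_crossProduct] at hJ hy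
  simpa only [vec3_dotProduct] using dotProduct_eq_of_hasDerivAt_cross hJ hy u₁ u₂

/-- Along the flow `dJ/du = (a²/2)(y × y⁻¹)`, `dy/du = −(1/2)(J × y⁻¹)` of the
deformed spherical top (with `y₁,y₂,y₃ ≠ 0`), the quantity
`(J,y) = J₁y₁ + J₂y₂ + J₃y₃` is constant in `u`; in particular the Casimir-type
constraint `(J,y) = 0` (the orbit `c₂ = 0`) is preserved by the flow. -/
theorem deformed_top_casimir_conserved (a : ℝ)
    (J y : ℝ → Fin 3 → ℝ)
    (hy0 : ∀ u, y u 0 ≠ 0 ∧ y u 1 ≠ 0 ∧ y u 2 ≠ 0)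
    (hJ : ∀ u, HasDerivAt J ((a ^ 2 / 2) • cross (y u) (fun i => (y u i)⁻¹)) u)
    (hy : ∀ u, HasDerivAt y (-((1 : ℝ) / 2) • cross (J u) (fun i => (y u i)⁻¹)) u) :
    ∀ u₁ u₂ : ℝ,
      J u₁ 0 * y u₁ 0 + J u₁ 1 * y u₁ 1 + J u₁ 2 * y u₁ 2 =
        J u₂ 0 * y u₂ 0 + J u₂ 1 * y u₂ 1 + J u₂ 2 * y u₂ 2 :=
  deformed_top_casimir_conserved_general a J y hJ hy
end
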